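/- arXiv:2204.01469 — 2 statements merged into one kernel-verified Lean document; each statement's English description precedes it below -/
import Mathlib

section
/- Let p be a probability distribution on a finite set {x_1, ..., x_K} with p(x_k) > 0 for every k. Define the Miller–Madow estimator Ĥ_mm(D_N) = Ĥ_mle(D_N) + (K − 1)/(2N), where D_N consists of N i.i.d. samples from p. Then the bias of the Miller–Madow estimator is o(1/N): N · (E[Ĥ_mm(D_N)] − H(p)) → 0 as N → ∞. -/
open Finset Real Filter

/-- Shannon entropy of a finite distribution (convention `0 * log 0 = 0`). -/
noncomputable def entropy {K : ℕ} (p : Fin K → ℝ) : ℝ := -∑ k, p k * Real.log (p k)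

/-- The empirical (maximum-likelihood) distribution of a dataset of `N` samples. -/
noncomputable def empirical {N K : ℕ} (D : Fin N → Fin K) (k : Fin K) : ℝ :=
  ((Finset.univ.filter (fun n => D n = k)).card : ℝ) / N

/-- Expectation of a statistic over `N` i.i.d. samples from `p`. -/
noncomputable def expect {N K : ℕ} (p : Fin K → ℝ) (f : (Fin N → Fin K) → ℝ) : ℝ :=
  ∑ D : Fin N → Fin K, (∏ n, p (D n)) * f D

/-!
With `t = p̂(x_k) / p(x_k)` we have `E t = 1`, so the plug-in bias in coordinate `k` is
`p(x_k) · E[t log t]`. For `t ≥ 0`, `t log t` lies between its cubic Taylor polynomial at `t = 1`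
and that polynomial plus `(t - 1)⁴ / 3`, so only the central moments of the binomial count
`N p̂(x_k)` up to order four enter; conditioning on the first sample gives them exactly. Hence
`N · p(x_k) · E[t log t] = (1 - p(x_k)) / 2 + O(1 / N)`, and these limits add up to `(K - 1) / 2`.
-/

open Topology

section Expect

variable {N K : ℕ} (p : Fin K → ℝ)

theorem expect_add (f g : (Fin N → Fin K) → ℝ) :
    expect p (fun D => f D + g D) = expect p f + expect p g := by
  simp only [_root_.expect, mul_add, sum_add_distrib]

theorem expect_const_mul (a : ℝ) (f : (Fin N → Fin K) → ℝ) :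
    expect p (fun D => a * f D) = a * expect p f := by
  simp only [_root_.expect, mul_sum, mul_left_comm]

theorem expect_neg (f : (Fin N → Fin K) → ℝ) :
    expect p (fun D => -f D) = -expect p f := by
  simp only [_root_.expect, mul_neg, sum_neg_distrib]

theorem expect_sum {ι : Type*} (s : Finset ι) (f : ι → (Fin N → Fin K) → ℝ) :
    expect p (fun D => ∑ i ∈ s, f i D) = ∑ i ∈ s, expect p (f i) := by
  simp only [_root_.expect, mul_sum]
  exact sum_comm

theorem expect_const (hsum : ∑ k, p k = 1) (a : ℝ) :
    expect p (fun _ : Fin N → Fin K => a) = a := by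
  rw [_root_.expect, ← sum_mul, ← Fintype.prod_sum, hsum, prod_const_one, one_mul]

theorem expect_mono (hp : ∀ k, 0 ≤ p k) {f g : (Fin N → Fin K) → ℝ}
    (hfg : ∀ D, f D ≤ g D) :
    expect p f ≤ expect p g :=
  sum_le_sum fun D _ => mul_le_mul_of_nonneg_left (hfg D) (prod_nonneg fun n _ => hp (D n))

theorem expect_succ (f : (Fin (N + 1) → Fin K) → ℝ) :
    expect p f = ∑ j, p j * expect p (fun D : Fin N → Fin K => f (Fin.cons j D)) := by
  rw [_root_.expect, ← (Fin.consEquiv fun _ => Fin K).sum_comp, Fintype.sum_prod_type]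
  refine sum_congr rfl fun j _ => ?_
  simp only [_root_.expect, mul_sum, Fin.prod_univ_succ]
  refine sum_congr rfl fun D _ => ?_
  simp [Fin.consEquiv, mul_assoc]

end Expect

def count {N K : ℕ} (D : Fin N → Fin K) (k : Fin K) : ℕ := #{n | D n = k}

theorem count_cons {N K : ℕ} (j : Fin K) (D : Fin N → Fin K) (k : Fin K) :
    count (Fin.cons j D : Fin (N + 1) → Fin K) k = count D k + if j = k then 1 else 0 := by
  simp only [count, card_filter, Fin.sum_univ_succ, Fin.cons_zero, Fin.cons_succ]
  ring

section Moments

variable {K : ℕ} (p : Fin K → ℝ) (k : Fin K)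

theorem expect_count_succ (hsum : ∑ k, p k = 1) {N : ℕ} (F : ℕ → ℝ) :
    expect p (fun D : Fin (N + 1) → Fin K => F (count D k)) =
      expect p (fun D : Fin N → Fin K =>
        p k * F (count D k + 1) + (1 - p k) * F (count D k)) := by
  set A := expect p (fun D : Fin N → Fin K => F (count D k + 1))
  set B := expect p (fun D : Fin N → Fin K => F (count D k))
  have hsplit : ∀ j, p j * expect p (fun D : Fin N → Fin K => F (count (Fin.cons j D) k))
      = p j * B + if j = k then p k * (A - B) else 0 := by
    intro j
    simp only [count_cons]
    split_ifs with hj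
    · subst hj; ring
    · simp [B]
  rw [expect_succ, expect_add, expect_const_mul, expect_const_mul]
  simp only [hsplit, sum_add_distrib, ← sum_mul, hsum, sum_ite_eq', mem_univ, if_true]
  ring

noncomputable def centeredCount {N : ℕ} (D : Fin N → Fin K) : ℝ := count D k - N * p k

theorem expect_centeredCount_succ (hsum : ∑ k, p k = 1) {N : ℕ} (F : ℝ → ℝ) :
    expect p (fun D : Fin (N + 1) → Fin K => F (centeredCount p k D)) =
      expect p (fun D : Fin N → Fin K => p k * F (centeredCount p k D + (1 - p k)) +
        (1 - p k) * F (centeredCount p k D - p k)) := by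
  refine (expect_count_succ p k hsum fun c => F (c - (N + 1 : ℕ) * p k)).trans ?_
  simp only [centeredCount]
  push_cast
  ring_nf

theorem expect_centeredCount (hsum : ∑ k, p k = 1) (N : ℕ) :
    expect p (fun D : Fin N → Fin K => centeredCount p k D) = 0 := by
  induction N with
  | zero => simp [_root_.expect, centeredCount, count]
  | succ N ih =>
    have h (x : ℝ) : p k * (x + (1 - p k)) + (1 - p k) * (x - p k) = x := by ring
    rw [expect_centeredCount_succ p k hsum fun x => x]
    simp only [h, ih]

theorem expect_centeredCount_sq (hsum : ∑ k, p k = 1) (N : ℕ) :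
    expect p (fun D : Fin N → Fin K => centeredCount p k D ^ 2) = N * p k * (1 - p k) := by
  induction N with
  | zero => simp [_root_.expect, centeredCount, count]
  | succ N ih =>
    have h (x : ℝ) : p k * (x + (1 - p k)) ^ 2 + (1 - p k) * (x - p k) ^ 2 =
        x ^ 2 + p k * (1 - p k) := by ring
    rw [expect_centeredCount_succ p k hsum fun x => x ^ 2]
    simp only [h, expect_add, expect_const p hsum, ih]
    push_cast
    ring

theorem expect_centeredCount_pow_three (hsum : ∑ k, p k = 1) (N : ℕ) :
    expect p (fun D : Fin N → Fin K => centeredCount p k D ^ 3) =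
      N * p k * (1 - p k) * (1 - 2 * p k) := by
  induction N with
  | zero => simp [_root_.expect, centeredCount, count]
  | succ N ih =>
    have h (x : ℝ) : p k * (x + (1 - p k)) ^ 3 + (1 - p k) * (x - p k) ^ 3 =
        x ^ 3 + (3 * p k * (1 - p k) * x + p k * (1 - p k) * (1 - 2 * p k)) := by ring
    rw [expect_centeredCount_succ p k hsum fun x => x ^ 3]
    simp only [h, expect_add, expect_const_mul, expect_const p hsum, ih,
      expect_centeredCount p k hsum]
    push_cast
    ring

theorem expect_centeredCount_pow_four (hsum : ∑ k, p k = 1) (N : ℕ) :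
    expect p (fun D : Fin N → Fin K => centeredCount p k D ^ 4) =
      3 * N ^ 2 * p k ^ 2 * (1 - p k) ^ 2 + N * p k * (1 - p k) * (1 - 6 * p k * (1 - p k)) := by
  induction N with
  | zero => simp [_root_.expect, centeredCount, count]
  | succ N ih =>
    have h (x : ℝ) : p k * (x + (1 - p k)) ^ 4 + (1 - p k) * (x - p k) ^ 4 =
        x ^ 4 + (6 * p k * (1 - p k) * x ^ 2 + (4 * p k * (1 - p k) * (1 - 2 * p k) * x +
          p k * (1 - p k) * (1 - 3 * p k * (1 - p k)))) := by ring
    rw [expect_centeredCount_succ p k hsum fun x => x ^ 4]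
    simp only [h, expect_add, expect_const_mul, expect_const p hsum, ih,
      expect_centeredCount p k hsum, expect_centeredCount_sq p k hsum]
    push_cast
    ring

end Moments

theorem le_of_hasDerivAt_of_sign {f f' : ℝ → ℝ} {a c t : ℝ}
    (hf : ∀ x, a < x → HasDerivAt f (f' x) x) (hsign : ∀ x, a < x → 0 ≤ (x - c) * f' x)
    (hc : a < c) (ht : a < t) : f c ≤ f t := by
  have hcont : ContinuousOn f (Set.Ioi a) := fun x hx => (hf x hx).continuousAt.continuousWithinAt
  rcases le_total c t with hct | htc
  · refine monotoneOn_of_hasDerivWithinAt_nonneg (f' := f') (convex_Icc c t)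
      (hcont.mono fun x hx => hc.trans_le hx.1) (fun x hx => ?_) (fun x hx => ?_)
      ⟨le_rfl, hct⟩ ⟨hct, le_rfl⟩ hct <;> rw [interior_Icc] at hx
    · exact (hf x (hc.trans hx.1)).hasDerivWithinAt
    · nlinarith [hsign x (hc.trans hx.1), hx.1]
  · refine antitoneOn_of_hasDerivWithinAt_nonpos (f' := f') (convex_Icc t c)
      (hcont.mono fun x hx => ht.trans_le hx.1) (fun x hx => ?_) (fun x hx => ?_)
      ⟨le_rfl, htc⟩ ⟨htc, le_rfl⟩ htc <;> rw [interior_Icc] at hx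
    · exact (hf x (ht.trans hx.1)).hasDerivWithinAt
    · nlinarith [hsign x (ht.trans hx.1), hx.2]

/-- The cubic Taylor polynomial of `t ↦ t * log t` at `t = 1`. -/
noncomputable def taylorMulLog (t : ℝ) : ℝ := (t - 1) + (t - 1) ^ 2 / 2 - (t - 1) ^ 3 / 6

theorem hasDerivAt_taylorMulLog (x : ℝ) :
    HasDerivAt taylorMulLog (1 + (x - 1) - (x - 1) ^ 2 / 2) x := by
  have hu := (hasDerivAt_id x).sub_const 1
  exact ((hu.add ((hu.pow 2).div_const 2)).sub ((hu.pow 3).div_const 6)).congr_deriv (by simp; ring)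

theorem taylorMulLog_le_mul_log {t : ℝ} (ht : 0 ≤ t) : taylorMulLog t ≤ t * log t := by
  rcases ht.eq_or_lt with rfl | ht
  · norm_num [taylorMulLog]
  have key := le_of_hasDerivAt_of_sign (f := fun x => log x - taylorMulLog x / x)
    (f' := fun x => (x - 1) ^ 3 / (3 * x ^ 2)) (c := 1)
    (fun x hx => by
      refine ((hasDerivAt_log hx.ne').sub
        ((hasDerivAt_taylorMulLog x).div (hasDerivAt_id x) hx.ne')).congr_deriv ?_
      simp only [taylorMulLog, id]
      field_simp
      ring)
    (fun x hx => by
      convert (by positivity : 0 ≤ (x - 1) ^ 4 / (3 * x ^ 2)) using 1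
      ring)
    one_pos ht
  norm_num [taylorMulLog] at key
  rw [div_le_iff₀ ht] at key
  rw [taylorMulLog, mul_comm]
  exact key

theorem mul_log_le_taylorMulLog_add {t : ℝ} (ht : 0 ≤ t) :
    t * log t ≤ taylorMulLog t + (t - 1) ^ 4 / 3 := by
  rcases ht.eq_or_lt with rfl | ht
  · norm_num [taylorMulLog]
  have key := le_of_hasDerivAt_of_sign
    (f := fun x => (taylorMulLog x + (x - 1) ^ 4 / 3) / x - log x)
    (f' := fun x => (x - 1) ^ 3 / x) (c := 1)
    (fun x hx => by
      have hu := (hasDerivAt_id x).sub_const 1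
      refine ((((hasDerivAt_taylorMulLog x).add ((hu.pow 4).div_const 3)).div (hasDerivAt_id x)
        hx.ne').sub (hasDerivAt_log hx.ne')).congr_deriv ?_
      simp only [taylorMulLog, id, Pi.add_apply, Pi.pow_apply]
      field_simp
      ring)
    (fun x hx => by
      convert (by positivity : 0 ≤ (x - 1) ^ 4 / x) using 1
      ring)
    one_pos ht
  norm_num [taylorMulLog] at key
  rw [le_div_iff₀ ht] at key
  rw [taylorMulLog, mul_comm]
  exact key

theorem mul_log_eq_mul_mul_log_div_add {a : ℝ} (ha : a ≠ 0) (x : ℝ) :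
    x * log x = a * (x / a * log (x / a)) + x * log a := by
  rcases eq_or_ne x 0 with rfl | hx
  · simp
  rw [log_div hx ha]
  field_simp
  ring

section Empirical

variable {K : ℕ} (p : Fin K → ℝ) (k : Fin K)

theorem empirical_nonneg {N : ℕ} (D : Fin N → Fin K) : 0 ≤ empirical D k := by
  unfold empirical
  positivity

theorem empirical_div_sub_one {N : ℕ} (hN : N ≠ 0) (hpk : p k ≠ 0) (D : Fin N → Fin K) :
    empirical D k / p k - 1 = centeredCount p k D / (N * p k) := by
  simp only [empirical, centeredCount, count]
  field_simp

theorem expect_empirical (hsum : ∑ k, p k = 1) {N : ℕ} (hN : N ≠ 0) :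
    expect p (fun D : Fin N → Fin K => empirical D k) = p k := by
  have h (D : Fin N → Fin K) : empirical D k = (N : ℝ)⁻¹ * centeredCount p k D + p k := by
    simp only [empirical, centeredCount, count]
    field_simp
    ring
  simp only [h, expect_add, expect_const_mul, expect_const p hsum, expect_centeredCount p k hsum]
  ring

theorem expect_mul_log_empirical_sub (hsum : ∑ k, p k = 1) {N : ℕ} (hN : N ≠ 0)
    (hpk : p k ≠ 0) :
    expect p (fun D : Fin N → Fin K => empirical D k * log (empirical D k)) - p k * log (p k) =
      p k * expect p (fun D : Fin N → Fin K =>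
        empirical D k / p k * log (empirical D k / p k)) := by
  simp only [mul_log_eq_mul_mul_log_div_add hpk (empirical _ k), expect_add, expect_const_mul]
  simp only [mul_comm _ (log (p k)), expect_const_mul, expect_empirical p k hsum hN]
  ring

theorem expect_taylorMulLog_empirical (hsum : ∑ k, p k = 1) {N : ℕ} (hN : N ≠ 0)
    (hpk : p k ≠ 0) :
    expect p (fun D : Fin N → Fin K => taylorMulLog (empirical D k / p k)) =
      (1 - p k) / (2 * (N * p k)) - (1 - p k) * (1 - 2 * p k) / (6 * (N * p k) ^ 2) := by
  set c := (N * p k)⁻¹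
  have h (D : Fin N → Fin K) : taylorMulLog (empirical D k / p k) =
      c * centeredCount p k D + (c ^ 2 / 2 * centeredCount p k D ^ 2 +
        -(c ^ 3 / 6) * centeredCount p k D ^ 3) := by
    rw [taylorMulLog, empirical_div_sub_one p k hN hpk]
    ring
  simp only [h, expect_add, expect_const_mul, expect_centeredCount p k hsum,
    expect_centeredCount_sq p k hsum, expect_centeredCount_pow_three p k hsum, c]
  have : (N : ℝ) ≠ 0 := Nat.cast_ne_zero.2 hN
  field_simp
  ring

theorem expect_empirical_div_sub_one_pow_four (hsum : ∑ k, p k = 1) {N : ℕ} (hN : N ≠ 0)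
    (hpk : p k ≠ 0) :
    expect p (fun D : Fin N → Fin K => (empirical D k / p k - 1) ^ 4) =
      (3 * N ^ 2 * p k ^ 2 * (1 - p k) ^ 2 + N * p k * (1 - p k) * (1 - 6 * p k * (1 - p k))) /
        (N * p k) ^ 4 := by
  simp only [empirical_div_sub_one p k hN hpk, div_pow, div_eq_inv_mul _ (((N : ℝ) * p k) ^ 4),
    expect_const_mul, expect_centeredCount_pow_four p k hsum]

theorem le_mul_expect_mul_log_empirical_sub (hsum : ∑ k, p k = 1) (hp : ∀ j, 0 ≤ p j)
    (hpk : p k ≠ 0) {N : ℕ} (hN : N ≠ 0) :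
    (1 - p k) / 2 - (1 - p k) * (1 - 2 * p k) / (6 * p k) / N ≤
      N * (expect p (fun D : Fin N → Fin K => empirical D k * log (empirical D k)) -
        p k * log (p k)) := by
  have : (N : ℝ) ≠ 0 := Nat.cast_ne_zero.2 hN
  rw [expect_mul_log_empirical_sub p k hsum hN hpk, ← mul_assoc]
  calc (1 - p k) / 2 - (1 - p k) * (1 - 2 * p k) / (6 * p k) / N
      = N * p k * expect p (fun D : Fin N → Fin K => taylorMulLog (empirical D k / p k)) := by
        rw [expect_taylorMulLog_empirical p k hsum hN hpk]
        field_simp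
    _ ≤ _ := mul_le_mul_of_nonneg_left (expect_mono p hp fun D =>
        taylorMulLog_le_mul_log (div_nonneg (empirical_nonneg k D) (hp k)))
        (mul_nonneg N.cast_nonneg (hp k))

theorem mul_expect_mul_log_empirical_sub_le (hsum : ∑ k, p k = 1) (hp : ∀ j, 0 ≤ p j)
    (hpk : p k ≠ 0) {N : ℕ} (hN : N ≠ 0) :
    N * (expect p (fun D : Fin N → Fin K => empirical D k * log (empirical D k)) -
        p k * log (p k)) ≤
      (1 - p k) / 2 - (1 - p k) * (1 - 2 * p k) / (6 * p k) / N +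
        ((1 - p k) ^ 2 / p k / N +
          (1 - p k) * (1 - 6 * p k * (1 - p k)) / (3 * p k ^ 2) / N / N) := by
  have : (N : ℝ) ≠ 0 := Nat.cast_ne_zero.2 hN
  rw [expect_mul_log_empirical_sub p k hsum hN hpk, ← mul_assoc]
  calc _ ≤ N * p k * expect p (fun D : Fin N → Fin K =>
          taylorMulLog (empirical D k / p k) + 3⁻¹ * (empirical D k / p k - 1) ^ 4) :=
        mul_le_mul_of_nonneg_left (expect_mono p hp fun D => (mul_log_le_taylorMulLog_add
          (div_nonneg (empirical_nonneg k D) (hp k))).trans_eq (by ring))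
          (mul_nonneg N.cast_nonneg (hp k))
    _ = _ := by
        simp only [expect_add, expect_const_mul, expect_taylorMulLog_empirical p k hsum hN hpk,
          expect_empirical_div_sub_one_pow_four p k hsum hN hpk]
        field_simp

theorem tendsto_mul_expect_mul_log_empirical_sub (hsum : ∑ k, p k = 1) (hp : ∀ j, 0 ≤ p j)
    (hpk : p k ≠ 0) :
    Tendsto (fun N : ℕ => (N : ℝ) *
        (expect p (fun D : Fin N → Fin K => empirical D k * log (empirical D k)) -
          p k * log (p k))) atTop (𝓝 ((1 - p k) / 2)) := by
  have hlower : Tendsto (fun N : ℕ => (1 - p k) / 2 - (1 - p k) * (1 - 2 * p k) / (6 * p k) / N)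
      atTop (𝓝 ((1 - p k) / 2)) := by
    simpa using tendsto_const_nhds.sub
      (tendsto_const_div_atTop_nhds_zero_nat ((1 - p k) * (1 - 2 * p k) / (6 * p k)))
  have hgap : Tendsto (fun N : ℕ => (1 - p k) ^ 2 / p k / N +
      (1 - p k) * (1 - 6 * p k * (1 - p k)) / (3 * p k ^ 2) / N / N) atTop (𝓝 0) := by
    rw [← add_zero (0 : ℝ)]
    exact (tendsto_const_div_atTop_nhds_zero_nat ((1 - p k) ^ 2 / p k)).add
      ((tendsto_const_div_atTop_nhds_zero_nat
        ((1 - p k) * (1 - 6 * p k * (1 - p k)) / (3 * p k ^ 2))).div_atTop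
        tendsto_natCast_atTop_atTop)
  refine tendsto_of_tendsto_of_tendsto_of_le_of_le' hlower (by simpa using hlower.add hgap)
    ?_ ?_ <;> filter_upwards [eventually_ne_atTop 0] with N hN
  · exact le_mul_expect_mul_log_empirical_sub p k hsum hp hpk hN
  · exact mul_expect_mul_log_empirical_sub_le p k hsum hp hpk hN

end Empirical

theorem expect_entropy_empirical {N K : ℕ} (p : Fin K → ℝ) :
    expect p (fun D : Fin N → Fin K => entropy (empirical D)) =
      -∑ k, expect p (fun D : Fin N → Fin K => empirical D k * log (empirical D k)) := by
  simp only [entropy, expect_neg, expect_sum]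

/-- The Miller–Madow estimator `Ĥ_mm(D_N) = Ĥ_mle(D_N) + (K−1)/(2N)` has bias `o(1/N)`:
`N · (E[Ĥ_mm(D_N)] − H(p)) → 0` as `N → ∞`. -/
theorem miller_madow_bias_little_o {K : ℕ}
    (p : Fin K → ℝ) (hp : ∀ k, 0 < p k) (hsum : ∑ k, p k = 1) :
    Tendsto
      (fun N : ℕ =>
        (N : ℝ) *
          (expect p
              (fun D : Fin N → Fin K =>
                entropy (empirical D) + ((K : ℝ) - 1) / (2 * N)) - entropy p))
      atTop (nhds 0) := by
  have hlim := ((tendsto_finsetSum univ fun k _ =>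
    tendsto_mul_expect_mul_log_empirical_sub p k hsum (fun j => (hp j).le) (hp k).ne').neg).add_const
      (((K : ℝ) - 1) / 2)
  have hzero : -∑ k, (1 - p k) / 2 + ((K : ℝ) - 1) / 2 = 0 := by
    rw [← sum_div, sum_sub_distrib, hsum]
    simp
  rw [hzero] at hlim
  refine hlim.congr' ?_
  filter_upwards [eventually_ne_atTop 0] with N hN
  rw [expect_add, expect_const p hsum, expect_entropy_empirical, entropy]
  simp only [mul_sub, sum_sub_distrib, ← mul_sum]
  field_simp
  ring
end

section
/- (NSB prior makes the expected entropy uniform.) Let K ≥ 2 be an integer. Let μ be the measure on (0, ∞) with density p_nsb(α) = ( K ψ₁(Kα + 1) − ψ₁(α + 1) ) / log K with respect to Lebesgue measure, where ψ₁ is the trigamma function. Let g⁻¹(α) = ψ(Kα + 1) − ψ(α + 1), where ψ is the digamma function. Then the pushforward of μ under g⁻¹ is the uniform probability measure on the interval [0, log K]; i.e., for every 0 ≤ a ≤ b ≤ log K, μ( { α > 0 : a ≤ g⁻¹(α) ≤ b } ) = (b − a) / log K. -/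
/-!
The map `g⁻¹(α) = ψ(Kα + 1) − ψ(α + 1)` is a primitive of `log K · p_nsb` on `[0, ∞)`, vanishes
at `0` and increases to `log K`. By the one-dimensional change of variables formula for monotone
maps, it therefore pushes the measure with density `p_nsb` forward to `1 / log K` times Lebesgue
measure on `(0, log K)`.

Everything about `ψ` comes from the Bohr–Mollerup limit formula
`log Γ(x) = lim (x log n + log n! − ∑_{m ≤ n} log (x + m))`, whose derivatives converge locally
uniformly; this gives the series
`ψ(x) = −γ + ∑ (1/(m + 1) − 1/(x + m))` and `ψ₁(x) = ∑ 1/(x + m)²`. Monotonicity of `g⁻¹` is the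
inequality `ψ₁(α + 1) ≤ K ψ₁(Kα + 1)`, and the limit `log K` follows from `ψ(n + 1) = −γ + H_n`
and `H_n − log n → γ`.
-/

open Real MeasureTheory

/-- The digamma function `ψ(t) = d/dt log Γ(t)`. -/
noncomputable def digamma (t : ℝ) : ℝ := deriv (fun s : ℝ => Real.log (Real.Gamma s)) t

/-- The trigamma function `ψ₁ = ψ′`. -/
noncomputable def trigamma (t : ℝ) : ℝ := deriv digamma t

/-- The NSB hyperprior density `p_nsb(α) = (K ψ₁(Kα + 1) − ψ₁(α + 1)) / log K`. -/
noncomputable def pNSB (K : ℕ) (α : ℝ) : ℝ :=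
  ((K : ℝ) * trigamma ((K : ℝ) * α + 1) - trigamma (α + 1)) / Real.log K

open Set Filter Topology

lemma image_Ioi_ae_eq_Ioo {F : ℝ → ℝ} {x₀ L : ℝ} (hcont : ContinuousOn F (Ici x₀))
    (hmono : MonotoneOn F (Ici x₀)) (hlim : Tendsto (fun n : ℕ => F n) atTop (𝓝 L)) :
    F '' Ioi x₀ =ᵐ[volume] Ioo (F x₀) L := by
  have hge : ∀ x : ℝ, ∀ᶠ n : ℕ in atTop, x ≤ n := fun x =>
    tendsto_natCast_atTop_atTop.eventually_ge_atTop x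
  have hsub : Ioo (F x₀) L ⊆ F '' Ioi x₀ := by
    rintro c ⟨hc₀, hcL⟩
    obtain ⟨n, hn, hx₀n⟩ := ((hlim.eventually_const_lt hcL).and (hge x₀)).exists
    obtain ⟨x, hx, rfl⟩ :=
      intermediate_value_Ioo hx₀n (hcont.mono Icc_subset_Ici_self) ⟨hc₀, hn⟩
    exact ⟨x, hx.1, rfl⟩
  have hsup : F '' Ioi x₀ ⊆ Icc (F x₀) L := by
    rintro _ ⟨x, hx, rfl⟩
    refine ⟨hmono self_mem_Ici (mem_Ici.2 hx.le) hx.le, ge_of_tendsto hlim ?_⟩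
    filter_upwards [hge x] with n hn
    exact hmono (mem_Ici.2 hx.le) (mem_Ici.2 (hx.le.trans hn)) hn
  refine (ae_eq_of_subset_of_measure_ge hsub ?_ measurableSet_Ioo.nullMeasurableSet
    (measure_ne_top_of_subset hsup measure_Icc_lt_top.ne)).symm
  calc volume (F '' Ioi x₀) ≤ volume (Icc (F x₀) L) := measure_mono hsup
    _ = volume (Ioo (F x₀) L) := by rw [Real.volume_Icc, Real.volume_Ioo]

theorem map_withDensity_eq_restrict_Ioo {F f : ℝ → ℝ} {x₀ L : ℝ} (hF : Measurable F)
    (hcont : ContinuousOn F (Ici x₀)) (hderiv : ∀ x ∈ Ioi x₀, HasDerivAt F (f x) x)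
    (hf : ∀ x ∈ Ioi x₀, 0 ≤ f x) (hlim : Tendsto (fun n : ℕ => F n) atTop (𝓝 L)) :
    ((volume.restrict (Ioi x₀)).withDensity fun x => ENNReal.ofReal (f x)).map F =
      volume.restrict (Ioo (F x₀) L) := by
  have hmono : MonotoneOn F (Ici x₀) := by
    refine monotoneOn_of_deriv_nonneg (convex_Ici x₀) hcont ?_ ?_ <;> rw [interior_Ici]
    · exact fun x hx => (hderiv x hx).differentiableAt.differentiableWithinAt
    · exact fun x hx => (hderiv x hx).deriv ▸ hf x hx
  ext t ht
  have hs : MeasurableSet (F ⁻¹' t ∩ Ioi x₀) := (hF ht).inter measurableSet_Ioi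
  rw [Measure.map_apply hF ht, withDensity_apply _ (hF ht), Measure.restrict_restrict (hF ht),
    lintegral_deriv_eq_volume_image_of_monotoneOn hs
      (fun x hx => (hderiv x hx.2).hasDerivWithinAt) (hmono.mono fun x hx => mem_Ici.2 hx.2.le),
    image_preimage_inter, Measure.restrict_apply ht]
  exact measure_congr ((ae_eq_refl t).inter (image_Ioi_ae_eq_Ioo hcont hmono hlim))

lemma volume_Icc_inter_Ioo {u v c d : ℝ} (hc : u ≤ c) (hd : d ≤ v) :
    volume (Icc c d ∩ Ioo u v) = ENNReal.ofReal (d - c) := by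
  have hsub : Ioo c d ⊆ Icc c d ∩ Ioo u v := fun x hx =>
    ⟨Ioo_subset_Icc_self hx, hc.trans_lt hx.1, hx.2.trans_le hd⟩
  refine le_antisymm ((measure_mono inter_subset_left).trans_eq (Real.volume_Icc ..)) ?_
  exact (Real.volume_Ioo ..).symm.trans_le (measure_mono hsub)

noncomputable def digammaSeries (x : ℝ) : ℝ :=
  -eulerMascheroniConstant + ∑' m : ℕ, (((m : ℝ) + 1)⁻¹ - (x + m)⁻¹)

noncomputable def trigammaSeries (x : ℝ) : ℝ := ∑' m : ℕ, ((x + m) ^ 2)⁻¹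

lemma summable_inv_add_nat_sq {x : ℝ} (hx : 0 < x) :
    Summable fun m : ℕ => ((x + m) ^ 2)⁻¹ := by
  refine ((Real.summable_one_div_nat_add_rpow x 2).2 one_lt_two).congr fun m => ?_
  rw [one_div, ← Real.rpow_natCast, abs_of_pos (by positivity), add_comm]
  norm_num

lemma hasDerivAt_digammaSeries {x : ℝ} (hx : 0 < x) :
    HasDerivAt digammaSeries (trigammaSeries x) x := by
  obtain ⟨δ, hδ, hδx1⟩ := exists_between (lt_min hx one_pos)
  rw [lt_min_iff] at hδx1
  have hterm : ∀ (m : ℕ) (y : ℝ), y ∈ Ioi δ →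
      HasDerivAt (fun z : ℝ => ((m : ℝ) + 1)⁻¹ - (z + m)⁻¹) ((y + m) ^ 2)⁻¹ y := by
    intro m y hy
    have hym : y + m ≠ 0 := by have : 0 < y := hδ.trans hy; positivity
    simpa [neg_div] using ((hasDerivAt_id y).add_const (m : ℝ)).inv hym |>.const_sub _
  refine (hasDerivAt_tsum_of_isPreconnected (summable_inv_add_nat_sq hδ) isOpen_Ioi
    isPreconnected_Ioi hterm (fun m y hy => ?_) (mem_Ioi.2 hδx1.2) ?_
    (mem_Ioi.2 hδx1.1)).const_add _
  · have : δ ≤ y := le_of_lt hy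
    rw [Real.norm_of_nonneg (by positivity)]
    gcongr
  · simp [add_comm]

lemma abs_inv_nat_add_one_sub_inv_le {δ R y : ℝ} (hδ : 0 < δ) (hδ1 : δ ≤ 1) (hy : y ∈ Icc δ R)
    (m : ℕ) : |((m : ℝ) + 1)⁻¹ - (y + m)⁻¹| ≤ (R + 1) * ((δ + m) ^ 2)⁻¹ := by
  obtain ⟨hδy, hyR⟩ := hy
  have hm : (0 : ℝ) ≤ m := m.cast_nonneg
  have hD : 0 < ((m : ℝ) + 1) * (y + m) := by nlinarith
  rw [inv_sub_inv (by positivity) (by linarith), abs_div, abs_of_pos hD, ← div_eq_mul_inv]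
  exact div_le_div₀ (by linarith) (abs_le.2 ⟨by linarith, by linarith⟩) (by positivity)
    (by nlinarith)

lemma tendsto_log_sub_harmonic_succ :
    Tendsto (fun n : ℕ => log n - harmonic (n + 1)) atTop (𝓝 (-eulerMascheroniConstant)) := by
  have h := (tendsto_harmonic_sub_log.neg).sub tendsto_one_div_add_atTop_nhds_zero_nat
  rw [sub_zero] at h
  refine h.congr fun n => ?_
  rw [harmonic_succ]
  push_cast
  ring

lemma tendstoUniformlyOn_digammaSeries {δ R : ℝ} (hδ : 0 < δ) (hδ1 : δ ≤ 1) :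
    TendstoUniformlyOn (fun (n : ℕ) (y : ℝ) => log n - ∑ m ∈ Finset.range (n + 1), (y + m)⁻¹)
      digammaSeries atTop (Icc δ R) := by
  have hpartial := tendstoUniformlyOn_tsum_nat ((summable_inv_add_nat_sq hδ).mul_left (R + 1))
    fun m y hy => (Real.norm_eq_abs _).trans_le (abs_inv_nat_add_one_sub_inv_le hδ hδ1 hy m)
  have hshift : TendstoUniformlyOn
      (fun (n : ℕ) (y : ℝ) => ∑ m ∈ Finset.range (n + 1), (((m : ℝ) + 1)⁻¹ - (y + m)⁻¹))
      (fun y => ∑' m : ℕ, (((m : ℝ) + 1)⁻¹ - (y + m)⁻¹)) atTop (Icc δ R) :=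
    fun u hu => (tendsto_add_atTop_nat 1).eventually (hpartial u hu)
  refine ((tendsto_log_sub_harmonic_succ.tendstoUniformlyOn_const _).add hshift).congr ?_
  filter_upwards with n y _
  simp only [Pi.add_apply, Finset.sum_sub_distrib, harmonic]
  push_cast
  ring

lemma hasDerivAt_logGammaSeq (n : ℕ) {y : ℝ} (hy : 0 < y) :
    HasDerivAt (fun x => BohrMollerup.logGammaSeq x n)
      (log n - ∑ m ∈ Finset.range (n + 1), (y + m)⁻¹) y := by
  have hsum : HasDerivAt (fun x => ∑ m ∈ Finset.range (n + 1), log (x + m))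
      (∑ m ∈ Finset.range (n + 1), (y + m)⁻¹) y := by
    refine HasDerivAt.fun_sum fun m _ => ?_
    simpa [one_div] using ((hasDerivAt_id y).add_const (m : ℝ)).log (by positivity)
  exact ((hasDerivAt_mul_const (log n)).add_const _).sub hsum

lemma hasDerivAt_log_Gamma {x : ℝ} (hx : 0 < x) :
    HasDerivAt (fun s => log (Gamma s)) (digammaSeries x) x := by
  obtain ⟨δ, hδ, hδx1⟩ := exists_between (lt_min hx one_pos)
  rw [lt_min_iff] at hδx1
  refine hasDerivAt_of_tendstoUniformlyOn (f := fun n y => BohrMollerup.logGammaSeq y n)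
    isOpen_Ioo
    ((tendstoUniformlyOn_digammaSeries (R := x + 1) hδ hδx1.2.le).mono Ioo_subset_Icc_self) ?_
    (fun y hy => BohrMollerup.tendsto_log_gamma (hδ.trans hy.1)) ⟨hδx1.1, lt_add_one x⟩
  filter_upwards with n y hy
  exact hasDerivAt_logGammaSeq n (hδ.trans hy.1)

lemma digamma_eq_digammaSeries {x : ℝ} (hx : 0 < x) : digamma x = digammaSeries x :=
  (hasDerivAt_log_Gamma hx).deriv

lemma hasDerivAt_digamma {x : ℝ} (hx : 0 < x) : HasDerivAt digamma (trigammaSeries x) x :=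
  (hasDerivAt_digammaSeries hx).congr_of_eventuallyEq <|
    eventually_of_mem (Ioi_mem_nhds hx) fun _ hy => digamma_eq_digammaSeries hy

lemma trigamma_eq_trigammaSeries {x : ℝ} (hx : 0 < x) : trigamma x = trigammaSeries x :=
  (hasDerivAt_digamma hx).deriv

lemma digamma_nat_add_one (n : ℕ) : digamma (n + 1) = -eulerMascheroniConstant + harmonic n := by
  have h := (hasDerivAt_Gamma_nat n).log (Gamma_pos_of_pos (by positivity)).ne'
  rw [digamma, h.deriv, Gamma_nat_eq_factorial]
  field_simp

/- Writing `m = qK + r` with `r < K`, the `K` terms of `K ψ₁(Kx + 1)` with a given `q` are each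
at least `1 / (K (x + 1 + q)²)`, so together they dominate the `q`-th term of `ψ₁(x + 1)`. -/
lemma trigammaSeries_add_one_le {K : ℕ} (hK : 0 < K) {x : ℝ} (hx : 0 ≤ x) :
    trigammaSeries (x + 1) ≤ K * trigammaSeries (K * x + 1) := by
  have : NeZero K := ⟨hK.ne'⟩
  have hblocks : HasSum
      (fun q : ℕ => ∑ r : Fin K, (K : ℝ) * ((K * x + 1 + (q * K + r : ℕ)) ^ 2)⁻¹)
      (K * trigammaSeries (K * x + 1)) := by
    have h := (summable_inv_add_nat_sq (x := K * x + 1) (by positivity)).hasSum.mul_left (K : ℝ)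
    exact ((Nat.divModEquiv K).symm.hasSum_iff.2 h).prod_fiberwise fun q => hasSum_fintype _
  refine hasSum_le (fun q => ?_) (summable_inv_add_nat_sq (by positivity)).hasSum hblocks
  calc ((x + 1 + q) ^ 2)⁻¹ = ∑ _r : Fin K, (K : ℝ) * ((K * (x + 1 + q)) ^ 2)⁻¹ := by
        rw [Finset.sum_const, Finset.card_univ, Fintype.card_fin, nsmul_eq_mul]
        field_simp
    _ ≤ _ := Finset.sum_le_sum fun r _ => ?_
  have hr : (r : ℝ) + 1 ≤ K := by exact_mod_cast r.is_lt
  gcongr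
  push_cast
  nlinarith

/-- The map `g⁻¹` of the statement: the prior mean of the entropy at concentration `α`. -/
noncomputable def nsbMeanEntropy (K : ℕ) (α : ℝ) : ℝ := digamma (K * α + 1) - digamma (α + 1)

lemma nsbMeanEntropy_zero (K : ℕ) : nsbMeanEntropy K 0 = 0 := by
  simp [nsbMeanEntropy]

lemma measurable_nsbMeanEntropy (K : ℕ) : Measurable (nsbMeanEntropy K) := by
  have : Measurable digamma := measurable_deriv _
  unfold nsbMeanEntropy
  fun_prop

lemma hasDerivAt_nsbMeanEntropy (K : ℕ) {α : ℝ} (hα : 0 ≤ α) :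
    HasDerivAt (nsbMeanEntropy K) (K * trigamma (K * α + 1) - trigamma (α + 1)) α := by
  have h1 := (hasDerivAt_digamma (x := K * α + 1) (by positivity)).comp α
    (((hasDerivAt_id α).const_mul (K : ℝ)).add_const 1)
  have h2 := (hasDerivAt_digamma (x := α + 1) (by positivity)).comp α
    ((hasDerivAt_id α).add_const 1)
  rw [trigamma_eq_trigammaSeries (by positivity), trigamma_eq_trigammaSeries (by positivity)]
  exact (h1.sub h2).congr_deriv (by simp only [mul_one]; ring)

lemma pNSB_nonneg {K : ℕ} (hK : 0 < K) {α : ℝ} (hα : 0 ≤ α) : 0 ≤ pNSB K α := by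
  rw [pNSB, trigamma_eq_trigammaSeries (by positivity), trigamma_eq_trigammaSeries (by positivity)]
  exact div_nonneg (sub_nonneg.2 (trigammaSeries_add_one_le hK hα)) (log_natCast_nonneg K)

lemma nsbMeanEntropy_natCast (K n : ℕ) :
    nsbMeanEntropy K n = harmonic (K * n) - harmonic n := by
  have hKn := digamma_nat_add_one (K * n)
  push_cast at hKn
  rw [nsbMeanEntropy, hKn, digamma_nat_add_one]
  ring

lemma tendsto_nsbMeanEntropy_natCast {K : ℕ} (hK : 0 < K) :
    Tendsto (fun n : ℕ => nsbMeanEntropy K n) atTop (𝓝 (log K)) := by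
  have hKn : Tendsto (fun n : ℕ => K * n) atTop atTop := tendsto_id.const_mul_atTop' hK
  have h := ((tendsto_harmonic_sub_log.comp hKn).sub tendsto_harmonic_sub_log).add_const (log K)
  rw [sub_self, zero_add] at h
  refine h.congr' ?_
  filter_upwards [eventually_ne_atTop 0] with n hn
  simp only [Function.comp_apply, nsbMeanEntropy_natCast, Nat.cast_mul]
  rw [log_mul (by exact_mod_cast hK.ne') (by exact_mod_cast hn)]
  ring

theorem map_nsbPrior_eq_restrict_Ioo {K : ℕ} (hK : 1 < K) :
    ((volume.restrict (Ioi 0)).withDensity fun α => ENNReal.ofReal (pNSB K α)).map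
      (fun α => nsbMeanEntropy K α / log K) = volume.restrict (Ioo 0 1) := by
  have hK0 : 0 < K := zero_lt_one.trans hK
  have hlog : 0 < log K := log_pos (by exact_mod_cast hK)
  have h := map_withDensity_eq_restrict_Ioo (f := pNSB K) (L := 1)
    ((measurable_nsbMeanEntropy K).div_const _)
    (fun α hα => ((hasDerivAt_nsbMeanEntropy K hα).div_const _).continuousAt.continuousWithinAt)
    (fun α hα => (hasDerivAt_nsbMeanEntropy K (le_of_lt hα)).div_const _)
    (fun α hα => pNSB_nonneg hK0 (le_of_lt hα))
    (by simpa [hlog.ne'] using (tendsto_nsbMeanEntropy_natCast hK0).div_const (log K))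
  rwa [nsbMeanEntropy_zero, zero_div] at h

theorem nsb_pushforward_uniform_general (K : ℕ) (hK : 2 ≤ K)
    (a b : ℝ) (ha : 0 ≤ a) (hb : b ≤ Real.log K) :
    ((volume.restrict (Set.Ioi (0 : ℝ))).withDensity
          (fun α => ENNReal.ofReal (pNSB K α)))
        {α : ℝ | a ≤ digamma ((K : ℝ) * α + 1) - digamma (α + 1) ∧
            digamma ((K : ℝ) * α + 1) - digamma (α + 1) ≤ b} =
      ENNReal.ofReal ((b - a) / Real.log K) := by
  have hlog : 0 < log K := log_pos (by exact_mod_cast hK)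
  have hset : {α : ℝ | a ≤ digamma ((K : ℝ) * α + 1) - digamma (α + 1) ∧
      digamma ((K : ℝ) * α + 1) - digamma (α + 1) ≤ b} =
      (fun α => nsbMeanEntropy K α / log K) ⁻¹' Icc (a / log K) (b / log K) := by
    ext α
    simp [nsbMeanEntropy, div_le_div_iff_of_pos_right hlog]
  rw [hset, ← Measure.map_apply ((measurable_nsbMeanEntropy K).div_const _) measurableSet_Icc,
    map_nsbPrior_eq_restrict_Ioo hK, Measure.restrict_apply measurableSet_Icc,
    volume_Icc_inter_Ioo (div_nonneg ha hlog.le) ((div_le_one hlog).2 hb), sub_div]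

/-- The NSB prior makes the expected entropy uniform: pushing forward the measure `μ`
on `(0, ∞)` with density `p_nsb` under `g⁻¹(α) = ψ(Kα + 1) − ψ(α + 1)` gives the
uniform probability measure on `[0, log K]`: for all `0 ≤ a ≤ b ≤ log K`,
`μ {α > 0 : a ≤ g⁻¹(α) ≤ b} = (b − a) / log K`. -/
theorem nsb_pushforward_uniform (K : ℕ) (hK : 2 ≤ K)
    (a b : ℝ) (ha : 0 ≤ a) (hab : a ≤ b) (hb : b ≤ Real.log K) :
    ((volume.restrict (Set.Ioi (0 : ℝ))).withDensity
          (fun α => ENNReal.ofReal (pNSB K α)))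
        {α : ℝ | a ≤ digamma ((K : ℝ) * α + 1) - digamma (α + 1) ∧
            digamma ((K : ℝ) * α + 1) - digamma (α + 1) ≤ b} =
      ENNReal.ofReal ((b - a) / Real.log K) :=
  nsb_pushforward_uniform_general K hK a b ha hb
end
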